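/- arXiv:1605.03608 — 7 statements merged into one kernel-verified Lean document; each statement's English description precedes it below -/
import Mathlib

section
/- If X is the set of subsums of a sequence (a_n) of nonnegative reals, then every term a_n belongs to the center of distances of X. -/
noncomputable def centerOfDistances (X : Set ℝ) : Set ℝ :=
  {α | 0 ≤ α ∧ ∀ x ∈ X, ∃ y ∈ X, |x - y| = α}

noncomputable def subsums (a : ℕ → ℝ) : Set ℝ :=
  {x | ∃ A : Set ℕ, x = ∑' n : A, a n}

noncomputable def cantorval : Set ℝ :=
  {x | ∃ d : ℕ → ℝ, (∀ n, d n ∈ ({0, 2, 3, 5} : Set ℝ)) ∧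
    x = ∑' n : ℕ, d n / 4 ^ (n + 1)}

/-! Toggling a single index `n` in or out of `A` moves the subsum by exactly `a n`. -/

theorem Summable.tsum_insert {α β : Type*} [AddCommMonoid α] [TopologicalSpace α]
    [ContinuousAdd α] [T2Space α] {f : β → α} {s : Set β} {b : β} (hb : b ∉ s)
    (hs : Summable (f ∘ (↑) : s → α)) :
    ∑' x : ↑(insert b s), f x = f b + ∑' x : s, f x := by
  rw [Set.insert_eq, Summable.tsum_union_disjoint (Set.disjoint_singleton_left.2 hb)
    ((Set.finite_singleton b).summable _) hs, tsum_singleton]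

theorem stmt0 (a : ℕ → ℝ) (hpos : ∀ n, 0 ≤ a n) (hsum : Summable a) (n : ℕ) :
    a n ∈ centerOfDistances (subsums a) := by
  refine ⟨hpos n, ?_⟩
  rintro _ ⟨A, rfl⟩
  have hinsert (s : Set ℕ) (hs : n ∉ s) : ∑' m : ↑(insert n s), a m = a n + ∑' m : s, a m :=
    Summable.tsum_insert hs (hsum.subtype (· ∈ s))
  by_cases hn : n ∈ A
  · obtain ⟨s, hs, rfl⟩ : ∃ s, n ∉ s ∧ insert n s = A :=
      ⟨A \ {n}, by simp, Set.insert_sdiff_self_of_mem hn⟩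
    refine ⟨_, ⟨s, rfl⟩, ?_⟩
    rw [hinsert s hs, add_sub_cancel_right, abs_of_nonneg (hpos n)]
  · refine ⟨_, ⟨insert n A, rfl⟩, ?_⟩
    rw [abs_sub_comm, hinsert A hn, add_sub_cancel_right, abs_of_nonneg (hpos n)]
end

section
/- For q > 2, the center of distances of the set of subsums of the geometric sequence (1/q^n)_{n≥1} is {0} ∪ {1/q^n : n ≥ 1}. -/
/-!
Write `geom q n = 1 / q ^ (n + 1)`. Toggling the digit `m` of a subsum moves it by exactly
`geom q m`, so every `geom q m` is a center distance. For `q > 2` the tail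
`∑_{k ≥ n} geom q k = 1 / (q ^ n * (q - 1))` is smaller than `2 * geom q n`, and no subsum lies in
the gap of length `(q - 2) / (q ^ n * (q - 1))` just below `∑_{k < n} geom q k`.

Conversely, a center distance `α` is itself a subsum `∑_{k ∈ B} geom q k` (its distance from `0`).
If `B` has least element `n` and some other element, there is a set `U ⊆ [n, ∞)` containing `n`
whose subsum is below `α` by less than the gap length. For the subsum `x` over `[0, n) ∪ U`,
`x - α` lies in the gap while `x + α` exceeds the sum of the whole series, so `α` is not a center
distance. Hence `B` is empty or a singleton.
-/

open Set

lemma zero_mem_centerOfDistances (X : Set ℝ) : 0 ∈ centerOfDistances X :=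
  ⟨le_rfl, fun x hx => ⟨x, hx, by simp⟩⟩

noncomputable def subsum (a : ℕ → ℝ) (A : Set ℕ) : ℝ := ∑' n : A, a n

lemma subsum_mem_subsums (a : ℕ → ℝ) (A : Set ℕ) : subsum a A ∈ subsums a := ⟨A, rfl⟩

@[simp] lemma subsum_empty (a : ℕ → ℝ) : subsum a ∅ = 0 := tsum_empty

@[simp] lemma subsum_singleton (a : ℕ → ℝ) (m : ℕ) : subsum a {m} = a m := tsum_singleton m a

section Subsum

variable {a : ℕ → ℝ}

lemma subsum_union (ha : Summable a) {A B : Set ℕ} (h : Disjoint A B) :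
    subsum a (A ∪ B) = subsum a A + subsum a B :=
  Summable.tsum_union_disjoint h (ha.subtype _) (ha.subtype _)

lemma subsum_insert (ha : Summable a) {A : Set ℕ} {m : ℕ} (hm : m ∉ A) :
    subsum a (insert m A) = a m + subsum a A := by
  rw [insert_eq, subsum_union ha (disjoint_singleton_left.mpr hm), subsum_singleton]

lemma subsum_sdiff_singleton (ha : Summable a) {A : Set ℕ} {m : ℕ} (hm : m ∈ A) :
    subsum a (A \ {m}) = subsum a A - a m := by
  have := subsum_insert ha (notMem_sdiff_of_mem (mem_singleton m) : m ∉ A \ {m})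
  rw [insert_sdiff_singleton, insert_eq_of_mem hm] at this
  linarith

lemma subsum_nonneg (ha₀ : 0 ≤ a) (A : Set ℕ) : 0 ≤ subsum a A := tsum_nonneg fun n => ha₀ n

lemma subsum_mono (ha : Summable a) (ha₀ : 0 ≤ a) {A B : Set ℕ} (h : A ⊆ B) :
    subsum a A ≤ subsum a B := by
  rw [← union_sdiff_cancel h, subsum_union ha disjoint_sdiff_right]
  linarith [subsum_nonneg ha₀ (B \ A)]

lemma apply_mem_centerOfDistances_subsums (ha : Summable a) {m : ℕ} (hm : 0 ≤ a m) :
    a m ∈ centerOfDistances (subsums a) := by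
  refine ⟨hm, ?_⟩
  rintro x ⟨A, rfl : x = subsum a A⟩
  by_cases hmA : m ∈ A
  · refine ⟨_, subsum_mem_subsums a (A \ {m}), ?_⟩
    rw [subsum_sdiff_singleton ha hmA, sub_sub_cancel, abs_of_nonneg hm]
  · refine ⟨_, subsum_mem_subsums a (insert m A), ?_⟩
    rw [subsum_insert ha hmA, sub_add_cancel_right, abs_neg, abs_of_nonneg hm]

lemma exists_eq_subsum_of_mem_centerOfDistances (ha₀ : 0 ≤ a) {α : ℝ}
    (hα : α ∈ centerOfDistances (subsums a)) : ∃ B, α = subsum a B := by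
  obtain ⟨y, ⟨B, rfl : y = subsum a B⟩, hB⟩ := hα.2 0 ⟨∅, (subsum_empty a).symm⟩
  exact ⟨B, by rw [← hB, zero_sub, abs_neg, abs_of_nonneg (subsum_nonneg ha₀ B)]⟩

end Subsum

noncomputable def geom (q : ℝ) (n : ℕ) : ℝ := 1 / q ^ (n + 1)

section Geom

variable {q : ℝ}

lemma geom_pos (hq : 0 < q) (n : ℕ) : 0 < geom q n := by unfold geom; positivity

lemma geom_nonneg (hq : 0 < q) : 0 ≤ geom q := fun n => (geom_pos hq n).le

lemma summable_geom (hq : 1 < q) : Summable (geom q) := by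
  have h := (summable_geometric_of_lt_one (by positivity)
    ((div_lt_one (by linarith)).2 hq)).mul_left (1 / q)
  exact h.congr fun n => by rw [geom, ← pow_succ', one_div_pow]

lemma subsum_geom_Ici (hq : 1 < q) (n : ℕ) : subsum (geom q) (Ici n) = 1 / (q ^ n * (q - 1)) := by
  have hrange : range (· + n) = Ici n :=
    Subset.antisymm (range_subset_iff.2 fun k => by simp) fun k hk => ⟨k - n, Nat.sub_add_cancel hk⟩
  have hterm : ∀ k, geom q (k + n) = 1 / q ^ (n + 1) * (1 / q) ^ k := fun k => by
    rw [geom, one_div_pow, one_div_mul_one_div, ← pow_add]; ring_nf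
  rw [subsum, ← hrange, tsum_range _ (add_left_injective n)]
  simp only [hterm]
  rw [tsum_mul_left, tsum_geometric_of_lt_one (by positivity) ((div_lt_one (by linarith)).2 hq)]
  have : q - 1 ≠ 0 := by linarith
  field_simp
  ring_nf

lemma subsum_geom_univ (hq : 1 < q) : subsum (geom q) univ = 1 / (q - 1) := by
  simpa using subsum_geom_Ici hq 0

lemma subsum_geom_Iio (hq : 1 < q) (n : ℕ) :
    subsum (geom q) (Iio n) = 1 / (q - 1) - 1 / (q ^ n * (q - 1)) := by
  rw [← subsum_geom_univ hq, ← subsum_geom_Ici hq n, ← Iio_union_Ici,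
    subsum_union (summable_geom hq) (Iio_disjoint_Ici le_rfl)]
  ring

lemma subsum_geom_Ici_succ_lt (hq : 2 < q) (n : ℕ) :
    subsum (geom q) (Ici (n + 1)) < geom q n := by
  rw [subsum_geom_Ici (by linarith), geom]
  exact div_lt_div_of_pos_left one_pos (by positivity)
    (by nlinarith [pow_pos (by linarith : 0 < q) (n + 1)])

lemma subsum_geom_Ici_lt_two_mul (hq : 2 < q) (n : ℕ) :
    subsum (geom q) (Ici n) < 2 * geom q n := by
  have hq0 : 0 < q := by linarith
  rw [subsum_geom_Ici (by linarith), geom, pow_succ, mul_one_div,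
    div_lt_div_iff₀ (mul_pos (by positivity) (by linarith)) (by positivity)]
  nlinarith [pow_pos hq0 n]

lemma subsum_geom_notMem_Ioo (hq : 1 < q) (n : ℕ) (C : Set ℕ) :
    subsum (geom q) C ∉ Ioo (1 / (q - 1) - 1 / q ^ n) (subsum (geom q) (Iio n)) := by
  have hg := summable_geom hq
  have hg₀ : 0 ≤ geom q := geom_nonneg (by linarith)
  rintro ⟨hlo, hhi⟩
  by_cases hC : Iio n ⊆ C
  · exact (subsum_mono hg hg₀ hC).not_gt hhi
  obtain ⟨i, hi, hiC⟩ := not_subset.1 hC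
  have hCi : C ⊆ univ \ {i} := fun k hk => ⟨trivial, fun hki => hiC (hki ▸ hk)⟩
  have hle := subsum_mono hg hg₀ hCi
  rw [subsum_sdiff_singleton hg (mem_univ i), subsum_geom_univ hq] at hle
  have : 1 / q ^ n ≤ geom q i := one_div_pow_le_one_div_pow_of_le hq.le (mem_Iio.1 hi)
  linarith

lemma exists_mem_geom_sub_subsum_lt (hq : 2 < q) {B : Set ℕ} {n : ℕ} (hnB : n ∈ B)
    (hBn : B ⊆ Ici n) (hB : B ≠ {n}) :
    ∃ s ∈ B, n < s ∧
      geom q s - subsum (geom q) (Ici (s + 1) \ B) < (q - 2) / (q ^ n * (q - 1)) := by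
  have hq0 : 0 < q := by linarith
  obtain ⟨s₀, hs₀B, hs₀n⟩ : ∃ s₀ ∈ B, s₀ ≠ n := by
    by_contra! h
    exact hB (eq_singleton_iff_unique_mem.2 ⟨hnB, h⟩)
  have hns₀ : n < s₀ := lt_of_le_of_ne (hBn hs₀B) hs₀n.symm
  by_cases hfin : B.Finite
  · set s := sSup B
    have hle : ∀ k ∈ B, k ≤ s := fun k hk => le_csSup hfin.bddAbove hk
    have hns : n < s := hns₀.trans_le (hle s₀ hs₀B)
    refine ⟨s, Nat.sSup_mem ⟨n, hnB⟩ hfin.bddAbove, hns, ?_⟩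
    have hnot : Ici (s + 1) \ B = Ici (s + 1) :=
      sdiff_eq_left.2 <| disjoint_left.2 fun k hk hkB =>
        (Nat.lt_succ_iff.2 (hle k hkB)).not_ge hk
    have hgap : geom q s - 1 / (q ^ (s + 1) * (q - 1))
        = (q - 2) / (q ^ (s + 1) * (q - 1)) := by
      have : q - 1 ≠ 0 := by linarith
      rw [geom]
      field_simp
      ring
    rw [hnot, subsum_geom_Ici (by linarith), hgap]
    exact div_lt_div_of_pos_left (by linarith) (mul_pos (by positivity) (by linarith)) <|
      mul_lt_mul_of_pos_right (pow_lt_pow_right₀ (by linarith) (by omega)) (by linarith)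
  · have hpos : 0 < (q - 2) / (q ^ n * (q - 1)) :=
      div_pos (by linarith) (mul_pos (by positivity) (by linarith))
    obtain ⟨k, hk⟩ := exists_pow_lt_of_lt_one hpos ((div_lt_one hq0).2 (by linarith : 1 < q))
    obtain ⟨s, hsB, hs⟩ := Set.Infinite.exists_gt hfin (max n k)
    refine ⟨s, hsB, (le_max_left _ _).trans_lt hs, ?_⟩
    calc geom q s - subsum (geom q) (Ici (s + 1) \ B)
        ≤ geom q s := sub_le_self _ (subsum_nonneg (geom_nonneg hq0) _)
      _ ≤ 1 / q ^ k := one_div_pow_le_one_div_pow_of_le (by linarith) (by omega)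
      _ = (1 / q) ^ k := (one_div_pow q k).symm
      _ < _ := hk

lemma exists_subsum_geom_mem_Ioo (hq : 2 < q) {B : Set ℕ} {n : ℕ} (hnB : n ∈ B)
    (hBn : B ⊆ Ici n) (hB : B ≠ {n}) :
    ∃ U, n ∈ U ∧ U ⊆ Ici n ∧
      subsum (geom q) U ∈
        Ioo (subsum (geom q) B - (q - 2) / (q ^ n * (q - 1))) (subsum (geom q) B) := by
  have hg := summable_geom (by linarith : 1 < q)
  have hg₀ : 0 ≤ geom q := geom_nonneg (by linarith)
  obtain ⟨s, hsB, hns, hlt⟩ := exists_mem_geom_sub_subsum_lt hq hnB hBn hB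
  refine ⟨B \ {s} ∪ (Ici (s + 1) \ B), Or.inl ⟨hnB, hns.ne⟩, ?_, ?_⟩
  · exact union_subset (sdiff_subset.trans hBn)
      fun k hk => (Nat.le_succ_of_le hns.le).trans hk.1
  have hU : subsum (geom q) (B \ {s} ∪ (Ici (s + 1) \ B))
      = subsum (geom q) B - (geom q s - subsum (geom q) (Ici (s + 1) \ B)) := by
    rw [subsum_union hg (disjoint_sdiff_right.mono_left sdiff_subset),
      subsum_sdiff_singleton hg hsB]
    ring
  have htail : subsum (geom q) (Ici (s + 1) \ B) < geom q s :=
    (subsum_mono hg hg₀ sdiff_subset).trans_lt (subsum_geom_Ici_succ_lt hq s)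
  rw [hU]
  constructor <;> linarith

lemma eq_empty_or_singleton_of_subsum_geom_mem_centerOfDistances (hq : 2 < q) {B : Set ℕ}
    (hB : subsum (geom q) B ∈ centerOfDistances (subsums (geom q))) : B = ∅ ∨ ∃ n, B = {n} := by
  have hq1 : 1 < q := by linarith
  have hg := summable_geom hq1
  have hg₀ : 0 ≤ geom q := geom_nonneg (by linarith)
  rcases B.eq_empty_or_nonempty with hempty | hne
  · exact Or.inl hempty
  refine Or.inr ⟨sInf B, ?_⟩
  by_contra hBn
  set n := sInf B
  obtain ⟨U, hnU, hUn, hlo, hhi⟩ :=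
    exists_subsum_geom_mem_Ioo hq (Nat.sInf_mem hne) (fun k hk => Nat.sInf_le hk) hBn
  obtain ⟨y, ⟨C, rfl : y = subsum (geom q) C⟩, hy⟩ :=
    hB.2 _ (subsum_mem_subsums _ (Iio n ∪ U))
  rw [subsum_union hg ((Iio_disjoint_Ici le_rfl).mono_right hUn)] at hy
  rcases (abs_eq hB.1).1 hy with hC | hC
  · -- the subsum over `C` would lie in the gap just below `∑_{k<n} geom q k`
    have hIio := subsum_geom_Iio hq1 n
    have hgap : 1 / (q ^ n * (q - 1)) + (q - 2) / (q ^ n * (q - 1)) = 1 / q ^ n := by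
      have : q - 1 ≠ 0 := by linarith
      field_simp
      ring
    exact subsum_geom_notMem_Ioo hq1 n C ⟨by linarith, by linarith⟩
  · -- the subsum over `C` would exceed `∑_{k<n} geom q k + 2 * geom q n`, the whole series
    have hCle := subsum_mono hg hg₀ (subset_univ C)
    rw [← Iio_union_Ici (a := n), subsum_union hg (Iio_disjoint_Ici le_rfl)] at hCle
    have hnU' : geom q n ≤ subsum (geom q) U := by
      simpa using subsum_mono hg hg₀ (singleton_subset_iff.2 hnU)
    linarith [subsum_geom_Ici_lt_two_mul hq n]

end Geom

theorem stmt4 (q : ℝ) (hq : 2 < q) :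
    centerOfDistances (subsums (fun n => 1 / q ^ (n + 1))) =
      {0} ∪ {t : ℝ | ∃ n : ℕ, t = 1 / q ^ (n + 1)} := by
  change centerOfDistances (subsums (geom q)) = {0} ∪ {t | ∃ n, t = geom q n}
  have hq0 : 0 < q := by linarith
  ext α
  constructor
  · intro hα
    obtain ⟨B, rfl⟩ := exists_eq_subsum_of_mem_centerOfDistances (geom_nonneg hq0) hα
    rcases eq_empty_or_singleton_of_subsum_geom_mem_centerOfDistances hq hα with rfl | ⟨n, rfl⟩
    · exact Or.inl (subsum_empty _)
    · exact Or.inr ⟨n, subsum_singleton _ n⟩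
  · rintro (rfl | ⟨n, rfl⟩)
    · exact zero_mem_centerOfDistances _
    · exact apply_mem_centerOfDistances_subsums (summable_geom (by linarith)) (geom_pos hq0 n).le
end

section
/- The Guthrie–Nymann Cantorval X = { ∑_{n≥1} x_n/4^n : ∀n, x_n ∈ {0,2,3,5} } satisfies X = C₁ + C₂ where C₁ = { ∑_{n∈A} 2/4^n : A ⊆ ℕ_{>0} } and C₂ = { ∑_{n∈B} 3/4^n : B ⊆ ℕ_{>0} }. -/
/-! Every digit in `{0, 2, 3, 5}` is uniquely a sum of a digit in `{0, 2}` and one in `{0, 3}`, so a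
Cantorval expansion splits, term by term, into a subsum of `2 / 4 ^ (n + 1)` (over the positions with
digit `2` or `5`) and a subsum of `3 / 4 ^ (n + 1)` (over those with digit `3` or `5`); conversely
two such subsums add termwise to a Cantorval expansion, all series being absolutely convergent. -/

lemma summable_div_four_pow_succ (c : ℝ) : Summable fun n : ℕ => c / 4 ^ (n + 1) := by
  simpa [pow_succ, div_eq_mul_inv, mul_assoc] using
    (summable_geometric_of_lt_one (by norm_num : (0 : ℝ) ≤ 4⁻¹) (by norm_num)).mul_left (c / 4)

lemma tsum_subtype_add_tsum_subtype {ι : Type*} {f g : ι → ℝ} (hf : Summable f)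
    (hg : Summable g) (A B : Set ι) :
    ∑' i : A, f i + ∑' i : B, g i = ∑' i, (A.indicator f i + B.indicator g i) := by
  rw [tsum_subtype, tsum_subtype, (hf.indicator A).tsum_add (hg.indicator B)]

open Pointwise in
lemma subsums_add_subsums {a b : ℕ → ℝ} (ha : Summable a) (hb : Summable b) :
    subsums a + subsums b =
      {x | ∃ A B : Set ℕ, x = ∑' n, (A.indicator a n + B.indicator b n)} := by
  ext x
  constructor
  · rintro ⟨_, ⟨A, rfl⟩, _, ⟨B, rfl⟩, rfl⟩
    exact ⟨A, B, tsum_subtype_add_tsum_subtype ha hb A B⟩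
  · rintro ⟨A, B, rfl⟩
    exact ⟨_, ⟨A, rfl⟩, _, ⟨B, rfl⟩, tsum_subtype_add_tsum_subtype ha hb A B⟩

lemma forall_mem_digits_iff {d : ℕ → ℝ} :
    (∀ n, d n ∈ ({0, 2, 3, 5} : Set ℝ)) ↔
      ∃ A B : Set ℕ, d = fun n => A.indicator (fun _ => 2) n + B.indicator (fun _ => 3) n := by
  constructor
  · intro hd
    refine ⟨{n | d n = 2 ∨ d n = 5}, {n | d n = 3 ∨ d n = 5}, funext fun n => ?_⟩
    obtain h | h | h | h : d n = 0 ∨ d n = 2 ∨ d n = 3 ∨ d n = 5 := hd n <;>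
      norm_num [Set.indicator_apply, h]
  · rintro ⟨A, B, rfl⟩ n
    by_cases hA : n ∈ A <;> by_cases hB : n ∈ B <;> norm_num [hA, hB]

lemma indicator_add_indicator_div {ι : Type*} (A B : Set ι) (f g c : ι → ℝ) (i : ι) :
    (A.indicator f i + B.indicator g i) / c i =
      A.indicator (fun i => f i / c i) i + B.indicator (fun i => g i / c i) i := by
  by_cases hA : i ∈ A <;> by_cases hB : i ∈ B <;> simp [hA, hB, add_div]

open Pointwise in
theorem stmt6 :
    cantorval = subsums (fun n => (2 : ℝ) / 4 ^ (n + 1)) +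
      subsums (fun n => (3 : ℝ) / 4 ^ (n + 1)) := by
  ext x
  rw [subsums_add_subsums (summable_div_four_pow_succ 2) (summable_div_four_pow_succ 3)]
  simp only [cantorval, Set.mem_ofPred_eq, forall_mem_digits_iff]
  have split_term (A B : Set ℕ) (n : ℕ) :=
    indicator_add_indicator_div A B (fun _ => 2) (fun _ => 3) (fun n => 4 ^ (n + 1)) n
  constructor
  · rintro ⟨_, ⟨A, B, rfl⟩, rfl⟩
    exact ⟨A, B, tsum_congr (split_term A B)⟩
  · rintro ⟨A, B, rfl⟩
    exact ⟨_, ⟨A, B, rfl⟩, tsum_congr fun n => (split_term A B n).symm⟩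
end

section
/- Let K_n = [2/3, 1] ∩ { ∑_{i=1}^n x_i/4^i : ∀i, x_i ∈ {0,2,3,5} }. Then K_n consists of exactly (4^n − 1)/3 points, which are the arithmetic progression with common difference 1/4^n starting at 3/4^n + ∑_{i=1}^{n-1} 2/4^i and ending at ∑_{i=1}^{n} 3/4^i. -/
noncomputable def Kset (n : ℕ) : Set ℝ :=
  Set.Icc (2 / 3) 1 ∩
    {x | ∃ d : ℕ → ℝ, (∀ i, d i ∈ ({0, 2, 3, 5} : Set ℝ)) ∧
      x = ∑ i ∈ Finset.range n, d i / 4 ^ (i + 1)}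

/-!
Multiplying by `4 ^ n` turns `K_n` into `{m / 4 ^ n}` where `m` runs over the base-4 numerals of
length `n` with digits `0, 2, 3, 5` lying in `[2 · 4 ^ n / 3, 4 ^ n]`. Every residue mod 4 is a digit,
so peeling off the last digit shows that each integer `m` with `2 · 4 ^ n ≤ 3 m + 2` and `m < 4 ^ n`
is such a numeral; `4 ^ n` itself is not, and `3 ∤ 2 · 4 ^ n`. Hence `K_n` is
`{m / 4 ^ n : 2 · 4 ^ n < 3 m, m < 4 ^ n}`, an arithmetic progression of `(4 ^ n - 1) / 3` points.
-/

open Finset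

lemma exists_three_mul_add_one_eq_four_pow (n : ℕ) : ∃ N : ℕ, 3 * N + 1 = 4 ^ n := by
  obtain ⟨N, hN⟩ : 3 ∣ 4 ^ n - 1 := by simpa using Nat.sub_dvd_pow_sub_pow 4 1 n
  exact ⟨N, by have := Nat.one_le_pow n 4 (by norm_num); omega⟩

lemma four_pow_emod_three (n : ℕ) : (4 : ℤ) ^ n % 3 = 1 := by
  obtain ⟨N, hN⟩ := exists_three_mul_add_one_eq_four_pow n
  have : 3 * (N : ℤ) + 1 = 4 ^ n := by exact_mod_cast hN
  omega

def digitNumerals : ℕ → Set ℤ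
  | 0 => {0}
  | n + 1 => {m | ∃ s ∈ digitNumerals n, ∃ c ∈ ({0, 2, 3, 5} : Set ℤ), m = 4 * s + c}

lemma four_pow_notMem_digitNumerals (n : ℕ) : (4 : ℤ) ^ n ∉ digitNumerals n := by
  induction n with
  | zero => simp [digitNumerals]
  | succ n ih =>
    rintro ⟨s, hs, c, hc, hsc⟩
    rw [pow_succ] at hsc
    rcases hc with rfl | rfl | rfl | rfl
    · exact ih (by rwa [show (4 : ℤ) ^ n = s by omega])
    all_goals omega

lemma mem_digitNumerals_of_le_of_lt {n : ℕ} {m : ℤ} (hlo : 2 * 4 ^ n ≤ 3 * m + 2)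
    (hhi : m < 4 ^ n) : m ∈ digitNumerals n := by
  induction n generalizing m with
  | zero => simp_all [digitNumerals]; omega
  | succ n ih =>
    have h3 := four_pow_emod_three n
    rw [pow_succ] at hlo hhi
    -- `c` may exceed the last base-4 digit of `m` by 4; since `3 ∣ 2 · 4 ^ n + 1` (`h3`), the
    -- lower bound still holds for `(m - c) / 4`.
    have hdigit : ∃ c ∈ ({0, 2, 3, 5} : Set ℤ), 4 ∣ m - c ∧ 2 * 4 ^ n * 4 ≤ 3 * (m - c) + 8 := by
      rcases (by omega : m % 4 = 0 ∨ m % 4 = 1 ∨ m % 4 = 2 ∨ m % 4 = 3) with h | h | h | h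
      · exact ⟨0, by simp, by omega⟩
      · exact ⟨5, by simp, by omega⟩
      · exact ⟨2, by simp, by omega⟩
      · exact ⟨3, by simp, by omega⟩
    obtain ⟨c, hc, ⟨s, hs⟩, hsc⟩ := hdigit
    have hc0 : 0 ≤ c := by rcases hc with rfl | rfl | rfl | rfl <;> norm_num
    exact ⟨s, ih (by omega) (by omega), c, hc, by omega⟩

def digitSums (n : ℕ) : Set ℝ :=
  {x | ∃ d : ℕ → ℝ, (∀ i, d i ∈ ({0, 2, 3, 5} : Set ℝ)) ∧
      x = ∑ i ∈ Finset.range n, d i / 4 ^ (i + 1)}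

lemma Kset_eq_inter_digitSums (n : ℕ) : Kset n = Set.Icc (2 / 3) 1 ∩ digitSums n := rfl

lemma digitSums_succ (n : ℕ) :
    digitSums (n + 1) =
      {x | ∃ y ∈ digitSums n, ∃ c ∈ ({0, 2, 3, 5} : Set ℝ), x = y + c / 4 ^ (n + 1)} := by
  ext x
  constructor
  · rintro ⟨d, hd, rfl⟩
    exact ⟨_, ⟨d, hd, rfl⟩, d n, hd n, sum_range_succ _ _⟩
  · rintro ⟨_, ⟨d, hd, rfl⟩, c, hc, rfl⟩
    refine ⟨Function.update d n c, fun i => ?_, ?_⟩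
    · rcases eq_or_ne i n with rfl | hi
      · simpa using hc
      · simpa [hi] using hd i
    · rw [sum_range_succ, Function.update_self]
      congr 1
      exact sum_congr rfl fun i hi => by rw [Function.update_of_ne (mem_range.1 hi).ne]

lemma digitSums_eq_image (n : ℕ) :
    digitSums n = (fun m : ℤ => (m : ℝ) / 4 ^ n) '' digitNumerals n := by
  induction n with
  | zero =>
    ext x
    simpa [digitSums, digitNumerals] using fun _ => ⟨fun _ => 0, by simp⟩
  | succ n ih =>
    have hdigits : ({0, 2, 3, 5} : Set ℝ) = Int.cast '' ({0, 2, 3, 5} : Set ℤ) := by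
      simp [Set.image_insert_eq]
    have hscale (s c : ℤ) : ((4 * s + c : ℤ) : ℝ) / 4 ^ (n + 1) = s / 4 ^ n + c / 4 ^ (n + 1) := by
      push_cast
      field_simp
      ring
    rw [digitSums_succ, ih, hdigits]
    ext x
    constructor
    · rintro ⟨_, ⟨s, hs, rfl⟩, _, ⟨c, hc, rfl⟩, rfl⟩
      exact ⟨4 * s + c, ⟨s, hs, c, hc, rfl⟩, hscale s c⟩
    · rintro ⟨_, ⟨s, hs, c, hc, rfl⟩, rfl⟩
      exact ⟨_, ⟨s, hs, rfl⟩, _, ⟨c, hc, rfl⟩, hscale s c⟩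

lemma mem_Kset_iff {n : ℕ} {x : ℝ} :
    x ∈ Kset n ↔ ∃ m : ℤ, 2 * 4 ^ n < 3 * m ∧ m < 4 ^ n ∧ x = m / 4 ^ n := by
  have hpos : (0 : ℝ) < 4 ^ n := by positivity
  have h3 := four_pow_emod_three n
  rw [Kset_eq_inter_digitSums, digitSums_eq_image]
  constructor
  · rintro ⟨⟨hlo, hhi⟩, m, hm, rfl⟩
    rw [le_div_iff₀ hpos] at hlo
    rw [div_le_one hpos] at hhi
    have hlo' : 2 * 4 ^ n ≤ 3 * m := by exact_mod_cast (by linarith : (2 * 4 ^ n : ℝ) ≤ 3 * m)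
    have hhi' : m ≤ 4 ^ n := by exact_mod_cast hhi
    have hne : m ≠ 4 ^ n := fun h => four_pow_notMem_digitNumerals n (h ▸ hm)
    exact ⟨m, by omega, by omega, rfl⟩
  · rintro ⟨m, hlo, hhi, rfl⟩
    refine ⟨⟨?_, ?_⟩, m, mem_digitNumerals_of_le_of_lt (by omega) hhi, rfl⟩
    · rw [le_div_iff₀ hpos]
      have : (2 * 4 ^ n : ℝ) < 3 * m := by exact_mod_cast hlo
      linarith
    · rw [div_le_one hpos]
      exact_mod_cast hhi.le

lemma Kset_eq_image {n N : ℕ} (hN : 3 * N + 1 = 4 ^ n) :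
    Kset n = (fun k : ℕ => (2 * N + 1 : ℝ) / 4 ^ n + k * (1 / 4 ^ n)) '' {k | k < N} := by
  have hNZ : (4 : ℤ) ^ n = 3 * N + 1 := by exact_mod_cast hN.symm
  ext x
  rw [mem_Kset_iff]
  constructor
  · rintro ⟨m, hlo, hhi, rfl⟩
    have hk : (((m - (2 * N + 1)).toNat : ℕ) : ℝ) = m - (2 * N + 1) := by
      exact_mod_cast (by omega : ((m - (2 * N + 1)).toNat : ℤ) = m - (2 * N + 1))
    refine ⟨(m - (2 * N + 1)).toNat, by rw [Set.mem_ofPred_eq]; omega, ?_⟩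
    simp only [hk]
    field_simp
    ring
  · rintro ⟨k, hk, rfl⟩
    rw [Set.mem_ofPred_eq] at hk
    refine ⟨2 * N + 1 + k, by omega, by omega, ?_⟩
    push_cast
    field_simp

lemma sum_Icc_div_four_pow (c : ℝ) (m : ℕ) :
    ∑ i ∈ Icc 1 m, c / 4 ^ i = c * (4 ^ m - 1) / (3 * 4 ^ m) := by
  induction m with
  | zero => simp
  | succ m ih =>
    rw [sum_Icc_succ_top (by omega), ih]
    field_simp
    ring

theorem stmt9 (n : ℕ) (hn : 1 ≤ n) :
    Kset n =
      (fun k : ℕ => (3 / 4 ^ n + ∑ i ∈ Finset.Icc 1 (n - 1), (2 : ℝ) / 4 ^ i)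
        + (k : ℝ) * (1 / 4 ^ n)) '' {k : ℕ | k < (4 ^ n - 1) / 3} ∧
    (Kset n).ncard = (4 ^ n - 1) / 3 ∧
    (3 / 4 ^ n + ∑ i ∈ Finset.Icc 1 (n - 1), (2 : ℝ) / 4 ^ i)
        + (((4 ^ n - 1) / 3 - 1 : ℕ) : ℝ) * (1 / 4 ^ n)
      = ∑ i ∈ Finset.Icc 1 n, (3 : ℝ) / 4 ^ i := by
  obtain ⟨N, hN⟩ := exists_three_mul_add_one_eq_four_pow n
  have hNR : (3 * N + 1 : ℝ) = 4 ^ n := by exact_mod_cast hN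
  have hstart : 3 / 4 ^ n + ∑ i ∈ Icc 1 (n - 1), (2 : ℝ) / 4 ^ i = (2 * N + 1) / 4 ^ n := by
    obtain ⟨m, rfl⟩ := Nat.exists_eq_add_of_le' hn
    rw [Nat.add_sub_cancel, sum_Icc_div_four_pow]
    rw [pow_succ] at hNR ⊢
    field_simp
    linarith
  have hend : ∑ i ∈ Icc 1 n, (3 : ℝ) / 4 ^ i = 3 * N / 4 ^ n := by
    rw [sum_Icc_div_four_pow, ← hNR]
    field_simp
    ring
  have hN1 : 1 ≤ N := by
    have := Nat.pow_le_pow_right (show 0 < 4 by norm_num) hn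
    omega
  rw [show (4 ^ n - 1) / 3 = N by omega, hstart, hend]
  refine ⟨Kset_eq_image hN, ?_, ?_⟩
  · rw [Kset_eq_image hN, Set.ncard_image_of_injective _ fun k l hkl => by simpa using hkl]
    exact Set.ncard_Iio_nat N
  · push_cast [Nat.cast_sub hN1]
    field_simp
    ring
end

section
/- The interval [2/3, 1] is contained in the Cantorval X = { ∑_{n≥1} x_n/4^n : ∀n, x_n ∈ {0,2,3,5} }. -/
open Set

lemma D_nonneg {a : ℝ} (h : a ∈ ({0,2,3,5} : Set ℝ)) : 0 ≤ a := by
  simp only [Set.mem_insert_iff, Set.mem_singleton_iff] at h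
  rcases h with h|h|h|h <;> norm_num [h]

lemma D_le {a : ℝ} (h : a ∈ ({0,2,3,5} : Set ℝ)) : a ≤ 5 := by
  simp only [Set.mem_insert_iff, Set.mem_singleton_iff] at h
  rcases h with h|h|h|h <;> norm_num [h]

lemma pow_eq (n : ℕ) : (5/4 : ℝ) * (1/4)^n = 5 / 4^(n+1) := by
  rw [div_pow, one_pow, pow_succ]
  ring

lemma summable_bound : Summable (fun n : ℕ => (5/4 : ℝ) * (1/4)^n) :=
  (summable_geometric_of_lt_one (by norm_num) (by norm_num)).mul_left _

lemma summable_digits {d : ℕ → ℝ} (h0 : ∀ n, 0 ≤ d n) (h5 : ∀ n, d n ≤ 5) :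
    Summable (fun n => d n / 4 ^ (n+1)) := by
  refine Summable.of_nonneg_of_le (fun n => div_nonneg (h0 n) (by positivity)) (fun n => ?_) summable_bound
  rw [pow_eq]
  gcongr
  exact h5 n

lemma summable_digits' {d : ℕ → ℝ} (hd : ∀ n, d n ∈ ({0,2,3,5} : Set ℝ)) :
    Summable (fun n => d n / 4 ^ (n+1)) :=
  summable_digits (fun n => D_nonneg (hd n)) (fun n => D_le (hd n))

lemma zero_mem_cantorval : (0:ℝ) ∈ cantorval :=
  ⟨fun _ => 0, fun _ => by norm_num, by simp⟩

lemma mem_shift {a x : ℝ} (ha : a ∈ ({0,2,3,5} : Set ℝ)) (hx : x ∈ cantorval) :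
    (x + a) / 4 ∈ cantorval := by
  classical
  obtain ⟨d, hd, rfl⟩ := hx
  refine ⟨fun n => if n = 0 then a else d (n-1), fun n => ?_, ?_⟩
  · cases n with
    | zero => simpa using ha
    | succ k => simpa using hd k
  · have hs2 : Summable (fun n => (if n = 0 then a else d (n-1)) / 4^(n+1)) := by
      apply summable_digits'
      intro n
      cases n with
      | zero => simpa using ha
      | succ k => simpa using hd k
    rw [Summable.tsum_eq_zero_add hs2]
    simp only [Nat.succ_ne_zero, if_false, if_true, Nat.add_sub_cancel, reduceIte]
    have : ∀ k : ℕ, d k / 4^(k+1+1) = (d k / 4^(k+1)) / 4 := by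
      intro k
      rw [pow_succ]
      ring
    rw [tsum_congr this, tsum_div_const]
    ring

lemma tsum_five : ∑' n : ℕ, (5:ℝ) / 4^(n+1) = 5/3 := by
  have : ∀ n : ℕ, (5:ℝ) / 4^(n+1) = (5/4) * (1/4)^n := fun n => (pow_eq n).symm
  rw [tsum_congr this, tsum_mul_left, tsum_geometric_of_lt_one (by norm_num) (by norm_num)]
  norm_num

lemma mem_sym {x : ℝ} (hx : x ∈ cantorval) : 5/3 - x ∈ cantorval := by
  obtain ⟨d, hd, rfl⟩ := hx
  refine ⟨fun n => 5 - d n, fun n => ?_, ?_⟩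
  · have := hd n
    simp only [Set.mem_insert_iff, Set.mem_singleton_iff] at this ⊢
    rcases this with h|h|h|h <;> norm_num [h]
  · have hs := summable_digits' hd
    have h5 : Summable (fun n : ℕ => (5:ℝ) / 4^(n+1)) :=
      summable_digits (fun n => by norm_num) (fun n => le_refl 5)
    have : ∀ n : ℕ, (5 - d n) / 4^(n+1) = (5:ℝ)/4^(n+1) - d n / 4^(n+1) := by
      intro n; ring
    rw [tsum_congr this, Summable.tsum_sub h5 hs, tsum_five]

noncomputable def cfun : (ℕ → ({0,2,3,5} : Set ℝ)) → ℝ := fun d => ∑' n, (d n : ℝ) / 4^(n+1)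

lemma cantorval_eq_range : cantorval = Set.range cfun := by
  ext x
  constructor
  · rintro ⟨d, hd, rfl⟩
    exact ⟨fun n => ⟨d n, hd n⟩, rfl⟩
  · rintro ⟨d, rfl⟩
    exact ⟨fun n => (d n : ℝ), fun n => (d n).2, rfl⟩

lemma isClosed_cantorval : IsClosed cantorval := by
  haveI : Finite ({0,2,3,5} : Set ℝ) := Set.Finite.to_subtype (by
    apply Set.Finite.insert; apply Set.Finite.insert; apply Set.Finite.insert
    exact Set.finite_singleton _)
  have hc : Continuous cfun := by
    apply continuous_tsum (u := fun n => (5/4 : ℝ) * (1/4)^n)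
    · intro n
      exact (continuous_subtype_val.comp (continuous_apply n)).div_const _
    · exact summable_bound
    · intro n d
      have h1 : (0:ℝ) ≤ (d n : ℝ) := D_nonneg (d n).2
      have h2 : ((d n : ℝ)) ≤ 5 := D_le (d n).2
      rw [Real.norm_eq_abs, abs_of_nonneg (by positivity), pow_eq]
      gcongr
  rw [cantorval_eq_range]
  exact (isCompact_range hc).isClosed

lemma step_est {s x ε t y : ℝ} (h : |s - x| ≤ ε) (ht : t - y = (s - x)/4) :
    |t - y| ≤ 5/3 * (1/4) * ε / (5/3) := by
  rw [ht, abs_div, abs_of_nonneg (by norm_num : (0:ℝ) ≤ (4:ℝ))]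
  linarith

lemma approx (n : ℕ) :
    (∀ t ∈ Icc (2/3:ℝ) 1, ∃ x ∈ cantorval, |t - x| ≤ 5/3 * (1/4)^n) ∧
    (∀ u ∈ Icc (0:ℝ) (2/3), (∃ x ∈ cantorval, |u - x| ≤ 5/3 * (1/4)^n) ∨
      (∃ x ∈ cantorval, |2/3 - u - x| ≤ 5/3 * (1/4)^n)) := by
  induction n with
  | zero =>
    constructor
    · intro t ht
      refine ⟨0, zero_mem_cantorval, ?_⟩
      rw [sub_zero, abs_of_nonneg (by linarith [ht.1])]
      simpa using ht.2.trans (by norm_num)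
    · intro u hu
      left
      refine ⟨0, zero_mem_cantorval, ?_⟩
      rw [sub_zero, abs_of_nonneg hu.1]
      simpa using hu.2.trans (by norm_num)
  | succ n ih =>
    obtain ⟨IA, IB⟩ := ih
    set ε : ℝ := 5/3 * (1/4)^n with hε
    have hE : (5/3 : ℝ) * (1/4)^(n+1) = ε / 4 := by rw [hε]; ring
    have key : ∀ s x t y : ℝ, |s - x| ≤ ε → t - y = (s - x)/4 → |t - y| ≤ 5/3 * (1/4)^(n+1) := by
      intro s x t y h hty
      rw [hE, hty, abs_div, abs_of_nonneg (by norm_num : (0:ℝ) ≤ (4:ℝ))]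
      linarith
    constructor
    · -- A part : t ∈ [2/3, 1]
      intro t ht
      rcases le_or_gt (4*t) 3 with h1 | h1
      · obtain ⟨x, hx, hxe⟩ := IA (4*t - 2) ⟨by linarith [ht.1], by linarith⟩
        exact ⟨(x+2)/4, mem_shift (by norm_num) hx, key _ x _ _ hxe (by ring)⟩
      rcases le_or_gt (11/3 : ℝ) (4*t) with h2 | h2
      · obtain ⟨x, hx, hxe⟩ := IA (4*t - 3) ⟨by linarith, by linarith [ht.2]⟩
        exact ⟨(x+3)/4, mem_shift (by norm_num) hx, key _ x _ _ hxe (by ring)⟩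
      · -- middle : 3 < 4t < 11/3, s := 4t - 3 ∈ [0, 2/3]
        rcases IB (4*t - 3) ⟨by linarith, by linarith⟩ with ⟨x, hx, hxe⟩ | ⟨x, hx, hxe⟩
        · exact ⟨(x+3)/4, mem_shift (by norm_num) hx, key _ x _ _ hxe (by ring)⟩
        · -- x close to 2/3 - (4t-3) ; 5/3 - x close to 4t - 2
          refine ⟨((5/3 - x)+2)/4, mem_shift (by norm_num) (mem_sym hx), ?_⟩
          apply key (4*t - 2) (5/3 - x) _ _ _ (by ring)
          have : 4*t - 2 - (5/3 - x) = -((2/3 - (4*t-3)) - x) := by ring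
          rw [this, abs_neg]
          exact hxe
    · -- B part : u ∈ [0, 2/3]
      intro u hu
      rcases le_or_gt (4*u) (2/3) with c1 | c1
      · rcases IB (4*u) ⟨by linarith [hu.1], c1⟩ with ⟨x, hx, hxe⟩ | ⟨x, hx, hxe⟩
        · left
          refine ⟨(x+0)/4, mem_shift (by norm_num) hx, key _ x _ _ hxe (by ring)⟩
        · right
          refine ⟨(x+2)/4, mem_shift (by norm_num) hx, ?_⟩
          apply key (2/3 - 4*u) x _ _ hxe (by ring)
      rcases le_or_gt (4*u) 1 with c2 | c2
      · obtain ⟨x, hx, hxe⟩ := IA (4*u) ⟨le_of_lt c1, c2⟩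
        left
        exact ⟨(x+0)/4, mem_shift (by norm_num) hx, key _ x _ _ hxe (by ring)⟩
      rcases le_or_gt (4*u) (5/3) with c3 | c3
      · rcases IB (5/3 - 4*u) ⟨by linarith, by linarith⟩ with ⟨x, hx, hxe⟩ | ⟨x, hx, hxe⟩
        · left
          refine ⟨((5/3 - x)+0)/4, mem_shift (by norm_num) (mem_sym hx), ?_⟩
          apply key (4*u) (5/3 - x) _ _ _ (by ring)
          have : 4*u - (5/3 - x) = -((5/3 - 4*u) - x) := by ring
          rw [this, abs_neg]; exact hxe
        · right
          refine ⟨((5/3 - x)+0)/4, mem_shift (by norm_num) (mem_sym hx), ?_⟩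
          apply key (4*(2/3 - u)) (5/3 - x) _ _ _ (by ring)
          have : 4*(2/3 - u) - (5/3 - x) = -((2/3 - (5/3 - 4*u)) - x) := by ring
          rw [this, abs_neg]; exact hxe
      rcases le_or_gt (4*u) 2 with c4 | c4
      · obtain ⟨x, hx, hxe⟩ := IA (4*(2/3 - u)) ⟨by linarith, by linarith⟩
        right
        exact ⟨(x+0)/4, mem_shift (by norm_num) hx, key _ x _ _ hxe (by ring)⟩
      · rcases IB (4*u - 2) ⟨by linarith, by linarith [hu.2]⟩ with ⟨x, hx, hxe⟩ | ⟨x, hx, hxe⟩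
        · left
          exact ⟨(x+2)/4, mem_shift (by norm_num) hx, key _ x _ _ hxe (by ring)⟩
        · right
          refine ⟨(x+0)/4, mem_shift (by norm_num) hx, ?_⟩
          apply key (2/3 - (4*u - 2)) x _ _ hxe (by ring)

theorem stmt10 : Set.Icc (2 / 3 : ℝ) 1 ⊆ cantorval := by
  intro t ht
  rw [← isClosed_cantorval.closure_eq, Metric.mem_closure_iff]
  intro δ hδ
  obtain ⟨n, hn⟩ := exists_pow_lt_of_lt_one (x := 3/5 * δ) (by positivity) (by norm_num : (1/4:ℝ) < 1)
  obtain ⟨x, hx, hxe⟩ := (approx n).1 t ht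
  refine ⟨x, hx, ?_⟩
  rw [Real.dist_eq]
  calc |t - x| ≤ 5/3 * (1/4)^n := hxe
    _ < δ := by linarith
end

section
/- The open interval (5/12, 1/2) is disjoint from the Cantorval X = { ∑_{n≥1} x_n/4^n : ∀n, x_n ∈ {0,2,3,5} }, i.e., (5/12, 1/2) is an X-gap. -/
theorem stmt12 : Disjoint (Set.Ioo (5 / 12 : ℝ) (1 / 2)) cantorval := by
  rw [Set.disjoint_left]
  rintro x ⟨hx1, hx2⟩ ⟨d, hd, rfl⟩
  have hdb : ∀ n, 0 ≤ d n ∧ d n ≤ 5 := by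
    intro n
    rcases hd n with h | h | h | h <;> rw [h] <;> norm_num
  have hgeo : Summable (fun n : ℕ => (1 / 4 : ℝ) ^ n) :=
    summable_geometric_of_lt_one (by norm_num) (by norm_num)
  have hgval : ∑' n : ℕ, (1 / 4 : ℝ) ^ n = 4 / 3 := by
    rw [tsum_geometric_of_lt_one (by norm_num) (by norm_num)]
    norm_num
  have hbd : ∀ k : ℕ, ∀ n : ℕ, d (n + k) / 4 ^ (n + k + 1) ≤ 5 / 4 ^ (k + 1) * (1 / 4 : ℝ) ^ n := by
    intro k n
    have h4 : (0:ℝ) < 4 ^ (n + k + 1) := by positivity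
    rw [div_le_iff₀ h4]
    have : 5 / 4 ^ (k + 1) * (1 / 4 : ℝ) ^ n * 4 ^ (n + k + 1) = 5 := by
      rw [div_pow, one_pow]
      field_simp
      ring
    rw [this]
    exact (hdb (n + k)).2
  have hsumk : ∀ k : ℕ, Summable (fun n : ℕ => d (n + k) / 4 ^ (n + k + 1)) := by
    intro k
    apply Summable.of_nonneg_of_le (fun n => by have := (hdb (n + k)).1; positivity) (hbd k)
    exact hgeo.mul_left _
  have hsum : Summable (fun n : ℕ => d n / 4 ^ (n + 1)) := by
    simpa using hsumk 0
  have hsplit : ∑' n : ℕ, d n / 4 ^ (n + 1)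
      = d 0 / 4 + ∑' n : ℕ, d (n + 1) / 4 ^ (n + 1 + 1) := by
    rw [Summable.tsum_eq_zero_add hsum]
    norm_num
  have hT0 : 0 ≤ ∑' n : ℕ, d (n + 1) / 4 ^ (n + 1 + 1) :=
    tsum_nonneg fun n => by have := (hdb (n + 1)).1; positivity
  have hT5 : ∑' n : ℕ, d (n + 1) / 4 ^ (n + 1 + 1) ≤ 5 / 12 := by
    calc ∑' n : ℕ, d (n + 1) / 4 ^ (n + 1 + 1)
        ≤ ∑' n : ℕ, 5 / 4 ^ (1 + 1) * (1 / 4 : ℝ) ^ n :=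
          Summable.tsum_le_tsum (hbd 1) (hsumk 1) (hgeo.mul_left _)
      _ = 5 / 4 ^ (1 + 1) * ∑' n : ℕ, (1 / 4 : ℝ) ^ n := tsum_mul_left
      _ = 5 / 12 := by rw [hgval]; norm_num
  rcases hd 0 with h0 | h0 | h0 | h0
  · have : ∑' n : ℕ, d n / 4 ^ (n + 1) ≤ 5 / 12 := by
      rw [hsplit, h0]; linarith
    linarith
  all_goals
    have : (1 : ℝ) / 2 ≤ ∑' n : ℕ, d n / 4 ^ (n + 1) := by
      rw [hsplit, h0]; linarith
    linarith
end

section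
/- If a point x of the Cantorval X has a digital representation (x_n) with digits in {0,2,3,5} such that x_n = 2 and x_{n+1} = 3 for infinitely many n, then this digital representation is unique: any sequence (y_n) with digits in {0,2,3,5} and ∑ y_n/4^n = x satisfies y_n = x_n for all n. -/
/-!
Let `c = d - e` and let `R m = ∑_{k ≥ 0} c (m + k) / 4 ^ (k + 1)` be the scaled tail of
`∑ c n / 4 ^ (n + 1) = 0`. Then `R 0 = 0`, `R (m + 1) = 4 R m - c m` and `|R m| ≤ 5 / 3`.
Since digit differences lie in `{0, ±1, ±2, ±3, ±5}`, this forces `R m ∈ {-1, 0, 1}` for all `m`,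
and `R` never returns to `0` once it has left it (a difference `c m = ±4` would be needed).
A block `2, 3` of `d` at position `m` forces `R m = 0`; as such blocks occur arbitrarily late,
`R` vanishes identically, hence so does `c m = 4 R m - R (m + 1)`.
-/

noncomputable def scaledTail (b : ℝ) (c : ℕ → ℝ) (m : ℕ) : ℝ :=
  ∑' k, c (m + k) / b ^ (k + 1)

section ScaledTail

variable {b B : ℝ} {c : ℕ → ℝ}

lemma hasSum_div_pow_succ (hb : 1 < b) (B : ℝ) :
    HasSum (fun k : ℕ => B / b ^ (k + 1)) (B / (b - 1)) := by
  have hb0 : 0 < b := by linarith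
  have hterm : (fun k : ℕ => B / b ^ (k + 1)) = fun k => B / b * b⁻¹ ^ k := by
    ext k
    rw [pow_succ, inv_pow]
    field_simp
  have hsum : B / (b - 1) = B / b * (1 - b⁻¹)⁻¹ := by
    have : b - 1 ≠ 0 := by linarith
    field_simp
  rw [hterm, hsum]
  exact (hasSum_geometric_of_lt_one (inv_nonneg.2 hb0.le) (inv_lt_one_of_one_lt₀ hb)).mul_left _

lemma norm_div_pow_succ_le (hb : 1 < b) (hc : ∀ k, |c k| ≤ B) (k : ℕ) :
    ‖c k / b ^ (k + 1)‖ ≤ B / b ^ (k + 1) := by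
  have hb0 : 0 < b := by linarith
  rw [Real.norm_eq_abs, abs_div, abs_of_pos (pow_pos hb0 (k + 1))]
  exact div_le_div_of_nonneg_right (hc k) (by positivity)

lemma summable_div_pow_succ (hb : 1 < b) (hc : ∀ k, |c k| ≤ B) :
    Summable fun k : ℕ => c k / b ^ (k + 1) :=
  (hasSum_div_pow_succ hb B).summable.of_norm_bounded (norm_div_pow_succ_le hb hc)

lemma abs_scaledTail_le (hb : 1 < b) (hc : ∀ k, |c k| ≤ B) (m : ℕ) :
    |scaledTail b c m| ≤ B / (b - 1) :=
  tsum_of_norm_bounded (hasSum_div_pow_succ hb B) (norm_div_pow_succ_le hb fun k => hc (m + k))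

lemma scaledTail_zero (b : ℝ) (c : ℕ → ℝ) : scaledTail b c 0 = ∑' k, c k / b ^ (k + 1) := by
  simp only [scaledTail, zero_add]

lemma scaledTail_succ (hb : 1 < b) (hc : ∀ k, |c k| ≤ B) (m : ℕ) :
    scaledTail b c (m + 1) = b * scaledTail b c m - c m := by
  have hb0 : b ≠ 0 := by positivity
  rw [scaledTail, scaledTail, (summable_div_pow_succ hb fun k => hc (m + k)).tsum_eq_zero_add,
    mul_add, ← tsum_mul_left]
  simp only [add_zero, zero_add, pow_one]
  rw [mul_div_cancel₀ _ hb0, add_sub_cancel_left]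
  refine tsum_congr fun k => ?_
  rw [pow_succ' b (k + 1), div_mul_eq_div_div_swap, mul_div_assoc', mul_div_cancel_left₀ _ hb0,
    add_assoc, add_comm 1 k]

lemma scaledTail_sub_zero_of_tsum_eq {d e : ℕ → ℝ} (hb : 1 < b) (hd : ∀ k, |d k| ≤ B)
    (he : ∀ k, |e k| ≤ B) (hsum : ∑' k, e k / b ^ (k + 1) = ∑' k, d k / b ^ (k + 1)) :
    scaledTail b (d - e) 0 = 0 := by
  simp only [scaledTail_zero, Pi.sub_apply, sub_div]
  rw [(summable_div_pow_succ hb hd).tsum_sub (summable_div_pow_succ hb he), hsum, sub_self]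

end ScaledTail

section Digits

variable {r x y y' : ℝ}

lemma mem_Icc_of_mem_digits (hx : x ∈ ({0, 2, 3, 5} : Set ℝ)) : x ∈ Set.Icc 0 5 := by
  simp only [Set.mem_insert_iff, Set.mem_singleton_iff] at hx
  rcases hx with rfl | rfl | rfl | rfl <;> norm_num

lemma abs_le_five_of_mem_digits (hx : x ∈ ({0, 2, 3, 5} : Set ℝ)) : |x| ≤ 5 := by
  have := mem_Icc_of_mem_digits hx
  rw [abs_of_nonneg this.1]
  exact this.2

lemma four_mul_sub_sub_mem (hr : r ∈ ({-1, 0, 1} : Set ℝ)) (hx : x ∈ ({0, 2, 3, 5} : Set ℝ))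
    (hy : y ∈ ({0, 2, 3, 5} : Set ℝ)) (h : |4 * r - (x - y)| ≤ 5 / 3) :
    4 * r - (x - y) ∈ ({-1, 0, 1} : Set ℝ) := by
  simp only [Set.mem_insert_iff, Set.mem_singleton_iff] at hr hx hy ⊢
  rw [abs_le] at h
  rcases hr with rfl | rfl | rfl <;> rcases hx with rfl | rfl | rfl | rfl <;>
    rcases hy with rfl | rfl | rfl | rfl <;> revert h <;> norm_num

-- `4 * r = x - y` with `r = ±1` would need two digits differing by `4`.
lemma four_mul_sub_sub_ne_zero (hr : r ∈ ({-1, 0, 1} : Set ℝ)) (hr0 : r ≠ 0)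
    (hx : x ∈ ({0, 2, 3, 5} : Set ℝ)) (hy : y ∈ ({0, 2, 3, 5} : Set ℝ)) :
    4 * r - (x - y) ≠ 0 := by
  simp only [Set.mem_insert_iff, Set.mem_singleton_iff] at hr hx hy
  rcases hr with rfl | rfl | rfl <;> rcases hx with rfl | rfl | rfl | rfl <;>
    rcases hy with rfl | rfl | rfl | rfl <;> revert hr0 <;> norm_num

lemma eq_zero_of_two_three (hr : r ∈ ({-1, 0, 1} : Set ℝ)) (hy : y ∈ ({0, 2, 3, 5} : Set ℝ))
    (hy' : y' ∈ ({0, 2, 3, 5} : Set ℝ)) (h₁ : 4 * r - (2 - y) ∈ ({-1, 0, 1} : Set ℝ))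
    (h₂ : 4 * (4 * r - (2 - y)) - (3 - y') ∈ ({-1, 0, 1} : Set ℝ)) :
    r = 0 := by
  simp only [Set.mem_insert_iff, Set.mem_singleton_iff] at hr hy hy' h₁ h₂
  rcases hr with rfl | rfl | rfl <;> rcases hy with rfl | rfl | rfl | rfl <;>
    rcases hy' with rfl | rfl | rfl | rfl <;> revert h₁ h₂ <;> norm_num

end Digits

section DigitPair

variable {d e : ℕ → ℝ}

lemma abs_sub_digits_le (hd : ∀ n, d n ∈ ({0, 2, 3, 5} : Set ℝ))
    (he : ∀ n, e n ∈ ({0, 2, 3, 5} : Set ℝ)) (n : ℕ) : |(d - e) n| ≤ 5 :=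
  abs_sub_le_of_nonneg_of_le (mem_Icc_of_mem_digits (hd n)).1 (mem_Icc_of_mem_digits (hd n)).2
    (mem_Icc_of_mem_digits (he n)).1 (mem_Icc_of_mem_digits (he n)).2

lemma scaledTail_digits_succ (hd : ∀ n, d n ∈ ({0, 2, 3, 5} : Set ℝ))
    (he : ∀ n, e n ∈ ({0, 2, 3, 5} : Set ℝ)) (m : ℕ) :
    scaledTail 4 (d - e) (m + 1) = 4 * scaledTail 4 (d - e) m - (d m - e m) :=
  scaledTail_succ (by norm_num) (abs_sub_digits_le hd he) m

lemma abs_scaledTail_digits_le (hd : ∀ n, d n ∈ ({0, 2, 3, 5} : Set ℝ))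
    (he : ∀ n, e n ∈ ({0, 2, 3, 5} : Set ℝ)) (m : ℕ) :
    |scaledTail 4 (d - e) m| ≤ 5 / 3 := by
  have h := abs_scaledTail_le (b := 4) (by norm_num) (abs_sub_digits_le hd he) m
  norm_num at h
  exact h

lemma scaledTail_digits_mem (hd : ∀ n, d n ∈ ({0, 2, 3, 5} : Set ℝ))
    (he : ∀ n, e n ∈ ({0, 2, 3, 5} : Set ℝ))
    (h0 : scaledTail 4 (d - e) 0 = 0) (m : ℕ) :
    scaledTail 4 (d - e) m ∈ ({-1, 0, 1} : Set ℝ) := by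
  induction m with
  | zero => simp [h0]
  | succ m ih =>
    have hbound := abs_scaledTail_digits_le hd he (m + 1)
    rw [scaledTail_digits_succ hd he] at hbound ⊢
    exact four_mul_sub_sub_mem ih (hd m) (he m) hbound

lemma scaledTail_digits_ne_zero_of_le (hd : ∀ n, d n ∈ ({0, 2, 3, 5} : Set ℝ))
    (he : ∀ n, e n ∈ ({0, 2, 3, 5} : Set ℝ))
    (h0 : scaledTail 4 (d - e) 0 = 0) {j n : ℕ}
    (hj : scaledTail 4 (d - e) j ≠ 0) (hjn : j ≤ n) : scaledTail 4 (d - e) n ≠ 0 := by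
  induction n, hjn using Nat.le_induction with
  | base => exact hj
  | succ n _ ih =>
    rw [scaledTail_digits_succ hd he]
    exact four_mul_sub_sub_ne_zero (scaledTail_digits_mem hd he h0 n) ih (hd n) (he n)

lemma scaledTail_digits_eq_zero_of_two_three (hd : ∀ n, d n ∈ ({0, 2, 3, 5} : Set ℝ))
    (he : ∀ n, e n ∈ ({0, 2, 3, 5} : Set ℝ))
    (h0 : scaledTail 4 (d - e) 0 = 0) {n : ℕ}
    (h2 : d n = 2) (h3 : d (n + 1) = 3) : scaledTail 4 (d - e) n = 0 := by
  have hmem := scaledTail_digits_mem hd he h0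
  refine eq_zero_of_two_three (hmem n) (he n) (he (n + 1)) ?_ ?_
  · simpa [← h2, scaledTail_digits_succ hd he] using hmem (n + 1)
  · simpa [← h2, ← h3, scaledTail_digits_succ hd he] using hmem (n + 2)

end DigitPair

theorem stmt18 (d : ℕ → ℝ) (hd : ∀ n, d n ∈ ({0, 2, 3, 5} : Set ℝ))
    (hinf : ∀ m : ℕ, ∃ n ≥ m, d n = 2 ∧ d (n + 1) = 3)
    (e : ℕ → ℝ) (he : ∀ n, e n ∈ ({0, 2, 3, 5} : Set ℝ))
    (hsum : ∑' n : ℕ, e n / 4 ^ (n + 1) = ∑' n : ℕ, d n / 4 ^ (n + 1)) :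
    e = d := by
  have h0 : scaledTail 4 (d - e) 0 = 0 :=
    scaledTail_sub_zero_of_tsum_eq (by norm_num) (fun n => abs_le_five_of_mem_digits (hd n))
      (fun n => abs_le_five_of_mem_digits (he n)) hsum
  have hR : ∀ m, scaledTail 4 (d - e) m = 0 := by
    by_contra! ⟨j, hj⟩
    obtain ⟨n, hjn, h2, h3⟩ := hinf j
    exact scaledTail_digits_ne_zero_of_le hd he h0 hj hjn
      (scaledTail_digits_eq_zero_of_two_three hd he h0 h2 h3)
  funext n
  linarith [scaledTail_digits_succ hd he n, hR n, hR (n + 1)]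
end
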